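/- arXiv:1906.11071 — 3 statements merged into one kernel-verified Lean document; each statement's English description precedes it below -/
import Mathlib

section
/- Suppose {α_i} and {μ_i} are such that Condition (*) holds (so that T_f is a bounded linear operator). If lim_{i→∞} η_i = 1, then the composition operator T_f : L^p(μ) → L^p(μ) is topologically mixing. -/
open MeasureTheory Filter Set Topology ENNReal NNReal

noncomputable section

/-- The odometer (the "+1" map, with carry over to the right) on `Π i, Fin (α i)`. -/
def odometer (α : ℕ → ℕ) (x : ∀ i, Fin (α i)) : ∀ i, Fin (α i) :=
  fun i =>
    if ∀ j < i, ((x j : ℕ) + 1 = α j)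
    then ⟨((x i : ℕ) + 1) % α i, Nat.mod_lt _ (x i).pos⟩
    else x i

/-- Topological transitivity of a self-map of a topological space. -/
def TopTransitive {X : Type*} [TopologicalSpace X] (T : X → X) : Prop :=
  ∀ U V : Set X, IsOpen U → IsOpen V → U.Nonempty → V.Nonempty →
    ∃ k : ℕ, 1 ≤ k ∧ (T^[k] '' U ∩ V).Nonempty

/-- Topological mixing of a self-map of a topological space. -/
def TopMixing {X : Type*} [TopologicalSpace X] (T : X → X) : Prop :=
  ∀ U V : Set X, IsOpen U → IsOpen V → U.Nonempty → V.Nonempty →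
    ∃ k₀ : ℕ, 1 ≤ k₀ ∧ ∀ k ≥ k₀, (T^[k] '' U ∩ V).Nonempty

/-- `μ` is the product of the probability measures on the coordinates `Fin (α i)` given by
the weights `w i`: every basic cylinder has measure the product of the weights. -/
def IsProductMeasure (α : ℕ → ℕ) (w : ∀ i, Fin (α i) → NNReal)
    (μ : Measure (∀ i, Fin (α i))) : Prop :=
  ∀ (n : ℕ) (a : ∀ i : Fin n, Fin (α i.1)),
    μ {x | ∀ i : Fin n, x i.1 = a i} = ∏ i : Fin n, (w i.1 (a i) : ENNReal)

/-- Condition (*): there is `c > 0` with `μ B ≥ c • μ (g ⁻¹ B)` for all measurable `B`. -/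
def CondStar {X : Type*} [MeasurableSpace X] (μ : Measure X) (g : X → X) : Prop :=
  ∃ c : ℝ, 0 < c ∧ ∀ B : Set X, MeasurableSet B →
    ENNReal.ofReal c * μ (g ⁻¹' B) ≤ μ B

/-! If `radix s ≤ k < radix (s + 1)` (mixed radix `radix s = α 0 ⋯ α (s - 1)`), adding `k` changes
the pair of digits at positions `s, s + 1`. So for the heaviest digits `b, b'` at these positions
the cylinder `P = {x s = b, x (s + 1) = b'}` is disjoint from `f^[k] ⁻¹' P`, while
`μ Pᶜ ≤ (1 - η_s) + (1 - η_{s+1}) → 0`. For bounded `φ, ψ`, the function equal to `φ` on `P` and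
to `ψ ∘ f⁻ᵏ` off `P` is then `Lᵖ`-close to `φ`, and its image under `T_fᵏ` is `Lᵖ`-close to `ψ`.
As bounded functions are dense in `Lᵖ`, `T_f` is mixing. -/

theorem topMixing_of_denseRange {Y ι : Type*} [PseudoEMetricSpace Y] {T : Y → Y} {e : ι → Y}
    (he : DenseRange e)
    (h : ∀ a b, ∀ ε > 0, ∀ᶠ k in atTop, ∃ u, edist u (e a) < ε ∧ edist (T^[k] u) (e b) < ε) :
    TopMixing T := by
  intro U V hU hV hUne hVne
  obtain ⟨a, ha⟩ := he.exists_mem_open hU hUne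
  obtain ⟨b, hb⟩ := he.exists_mem_open hV hVne
  obtain ⟨ε, hε, hεU⟩ := EMetric.isOpen_iff.1 hU _ ha
  obtain ⟨ε', hε', hεV⟩ := EMetric.isOpen_iff.1 hV _ hb
  obtain ⟨k₀, hk₀⟩ := eventually_atTop.1 (h a b (min ε ε') (lt_min hε hε'))
  refine ⟨max k₀ 1, le_max_right _ _, fun k hk => ?_⟩
  obtain ⟨u, hu, hTu⟩ := hk₀ k (le_of_max_le_left hk)
  exact ⟨T^[k] u, mem_image_of_mem _ (hεU (hu.trans_le (min_le_left _ _))),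
    hεV (hTu.trans_le (min_le_right _ _))⟩

lemma CondStar.quasiMeasurePreserving {X : Type*} [MeasurableSpace X] {μ : Measure X}
    {g : X → X} (h : CondStar μ g) (hg : Measurable g) : Measure.QuasiMeasurePreserving g μ μ where
  measurable := hg
  absolutelyContinuous := Measure.AbsolutelyContinuous.mk fun s hs hμs => by
    obtain ⟨c, hc, hB⟩ := h
    have hle := hB s hs
    rw [hμs, nonpos_iff_eq_zero, mul_eq_zero] at hle
    rw [Measure.map_apply hg hs]
    exact hle.resolve_left (ENNReal.ofReal_pos.2 hc).ne'

section Lp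

variable {X E : Type*} [MeasurableSpace X] [NormedAddCommGroup E] {μ : Measure X} {p : ℝ≥0∞}

lemma eLpNorm_sub_le_of_eqOn_compl {φ ψ : X → E} {C : ℝ} (hφ : ∀ x, ‖φ x‖ ≤ C)
    (hψ : ∀ x, ‖ψ x‖ ≤ C) {s : Set X} (hs : MeasurableSet s) (h : EqOn φ ψ sᶜ) :
    eLpNorm (φ - ψ) p μ ≤ μ s ^ p.toReal⁻¹ * ENNReal.ofReal (2 * C) := by
  have hind : φ - ψ = s.indicator (φ - ψ) := by
    ext x
    by_cases hx : x ∈ s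
    · simp [hx]
    · simp [hx, h hx]
  rw [hind, eLpNorm_indicator_eq_eLpNorm_restrict hs, ← Measure.restrict_apply_univ]
  refine eLpNorm_le_of_ae_bound (Eventually.of_forall fun x => ?_)
  calc ‖φ x - ψ x‖ ≤ ‖φ x‖ + ‖ψ x‖ := norm_sub_le _ _
    _ ≤ 2 * C := by linarith [hφ x, hψ x]

lemma coeFn_iterate_ae_eq_comp {f : X → X} (hf : Measure.QuasiMeasurePreserving f μ μ)
    {T : Lp E p μ → Lp E p μ} (hT : ∀ φ, ⇑(T φ) =ᵐ[μ] ⇑φ ∘ f) (k : ℕ) (φ : Lp E p μ) :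
    ⇑(T^[k] φ) =ᵐ[μ] ⇑φ ∘ f^[k] := by
  induction k generalizing φ with
  | zero => rfl
  | succ k ih =>
    rw [Function.iterate_succ_apply, Function.iterate_succ']
    exact (ih (T φ)).trans ((hf.iterate k).ae_eq_comp (hT φ))

/-- The witness is `φ` on `s` glued to `ψ ∘ g^[k]` off `s`. -/
lemma exists_edist_le_of_measurableSet [IsFiniteMeasure μ] {f g : X → X}
    (hf : Measure.QuasiMeasurePreserving f μ μ) (hg : Measurable g)
    (hgf : Function.LeftInverse g f) {T : Lp E p μ → Lp E p μ}
    (hT : ∀ φ, ⇑(T φ) =ᵐ[μ] ⇑φ ∘ f) {φ ψ : X → E} (hφ : StronglyMeasurable φ)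
    (hψ : StronglyMeasurable ψ) {C : ℝ} (hφC : ∀ x, ‖φ x‖ ≤ C) (hψC : ∀ x, ‖ψ x‖ ≤ C)
    {φ₀ ψ₀ : Lp E p μ} (hφ₀ : φ₀ =ᵐ[μ] φ) (hψ₀ : ψ₀ =ᵐ[μ] ψ) {s : Set X} (hs : MeasurableSet s)
    (k : ℕ) :
    ∃ u : Lp E p μ, edist u φ₀ ≤ μ sᶜ ^ p.toReal⁻¹ * ENNReal.ofReal (2 * C) ∧
      edist (T^[k] u) ψ₀ ≤ μ (f^[k] ⁻¹' s) ^ p.toReal⁻¹ * ENNReal.ofReal (2 * C) := by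
  classical
  set v := s.piecewise φ (ψ ∘ g^[k])
  have hvC : ∀ x, ‖v x‖ ≤ C := fun x => by
    by_cases hx : x ∈ s
    · simpa [v, hx] using hφC x
    · simpa [v, hx] using hψC _
  have hv : MemLp v p μ := MemLp.of_bound
    (hφ.piecewise hs (hψ.comp_measurable (hg.iterate k))).aestronglyMeasurable C
    (ae_of_all _ hvC)
  refine ⟨hv.toLp v, ?_, ?_⟩
  · rw [Lp.edist_def, eLpNorm_congr_ae (hv.coeFn_toLp.sub hφ₀)]
    refine eLpNorm_sub_le_of_eqOn_compl hvC hφC hs.compl fun x hx => ?_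
    exact s.piecewise_eq_of_mem _ _ (compl_compl s ▸ hx)
  · have hTv := (coeFn_iterate_ae_eq_comp hf hT k _).trans
      ((hf.iterate k).ae_eq_comp hv.coeFn_toLp)
    rw [Lp.edist_def, eLpNorm_congr_ae (hTv.sub hψ₀)]
    refine eLpNorm_sub_le_of_eqOn_compl (fun x => hvC _) hψC
      (hf.measurable.iterate k hs) fun x hx => ?_
    simp only [v, Function.comp_apply, s.piecewise_eq_of_notMem _ _ hx, hgf.iterate k x]

theorem topMixing_of_eventually_measure_lt [Fact (1 ≤ p)] [IsFiniteMeasure μ] (hp : p ≠ ⊤)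
    {f g : X → X} (hf : Measure.QuasiMeasurePreserving f μ μ) (hg : Measurable g)
    (hgf : Function.LeftInverse g f) {T : Lp E p μ → Lp E p μ}
    (hT : ∀ φ, ⇑(T φ) =ᵐ[μ] ⇑φ ∘ f)
    (h : ∀ δ > 0, ∀ᶠ k in atTop,
      ∃ s, MeasurableSet s ∧ μ sᶜ < δ ∧ μ (f^[k] ⁻¹' s) < δ) :
    TopMixing T := by
  refine topMixing_of_denseRange (Lp.simpleFunc.denseRange hp) fun a b ε hε => ?_
  set φ := Lp.simpleFunc.toSimpleFunc a
  set ψ := Lp.simpleFunc.toSimpleFunc b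
  obtain ⟨C₁, hC₁⟩ := φ.exists_forall_norm_le
  obtain ⟨C₂, hC₂⟩ := ψ.exists_forall_norm_le
  set C := max C₁ C₂
  have hp₀ : 0 < p.toReal⁻¹ :=
    inv_pos.2 (ENNReal.toReal_pos (zero_lt_one.trans_le Fact.out).ne' hp)
  have hsmall : Tendsto (fun δ : ℝ≥0∞ => δ ^ p.toReal⁻¹ * ENNReal.ofReal (2 * C)) (𝓝 0) (𝓝 0) := by
    have := ENNReal.Tendsto.mul_const ((ENNReal.continuous_rpow_const (y := p.toReal⁻¹)).tendsto 0)
      (Or.inr (ENNReal.ofReal_ne_top (r := 2 * C)))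
    rwa [ENNReal.zero_rpow_of_pos hp₀, zero_mul] at this
  obtain ⟨δ, hδ, hδε⟩ :=
    ENNReal.nhds_zero_basis.eventually_iff.1 (hsmall.eventually (gt_mem_nhds hε))
  filter_upwards [h δ hδ] with k ⟨s, hs, hsc, hsk⟩
  obtain ⟨u, hu, hTu⟩ := exists_edist_le_of_measurableSet hf hg hgf hT φ.stronglyMeasurable
    ψ.stronglyMeasurable (fun x => (hC₁ x).trans (le_max_left _ _))
    (fun x => (hC₂ x).trans (le_max_right _ _)) (Lp.simpleFunc.toSimpleFunc_eq_toFun a).symm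
    (Lp.simpleFunc.toSimpleFunc_eq_toFun b).symm hs k
  exact ⟨u, hu.trans_lt (hδε hsc), hTu.trans_lt (hδε hsk)⟩

end Lp

namespace Odometer

variable {α : ℕ → ℕ}

def radix (α : ℕ → ℕ) (m : ℕ) : ℕ := ∏ i ∈ Finset.range m, α i

/-- The integer with mixed-radix digits `x 0, …, x (m - 1)`, least significant first. -/
def value (α : ℕ → ℕ) (m : ℕ) (x : ∀ i, Fin (α i)) : ℕ :=
  ∑ i ∈ Finset.range m, (x i : ℕ) * radix α i

lemma radix_succ (m : ℕ) : radix α (m + 1) = radix α m * α m := Finset.prod_range_succ _ _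

lemma value_succ (m : ℕ) (x : ∀ i, Fin (α i)) :
    value α (m + 1) x = value α m x + x m * radix α m := Finset.sum_range_succ _ _

lemma value_lt (m : ℕ) (x : ∀ i, Fin (α i)) : value α m x < radix α m := by
  induction m with
  | zero => simp [value, radix]
  | succ m ih =>
    rw [value_succ, radix_succ]
    nlinarith [(x m).isLt]

lemma value_odometer_add_carry (m : ℕ) (x : ∀ i, Fin (α i)) :
    value α m (odometer α x) + (if ∀ j < m, (x j : ℕ) + 1 = α j then radix α m else 0) =
      value α m x + 1 := by
  induction m with
  | zero => simp [value, radix]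
  | succ m ih =>
    rw [value_succ, value_succ, radix_succ]
    by_cases hc : ∀ j < m, (x j : ℕ) + 1 = α j
    · have hfx : (odometer α x m : ℕ) = ((x m : ℕ) + 1) % α m := by
        simp only [odometer, if_pos hc]
      rw [if_pos hc] at ih
      by_cases hm : (x m : ℕ) + 1 = α m
      · have hR : radix α m * α m = radix α m * x m + radix α m := by rw [← mul_add_one, hm]
        rw [if_pos (Nat.forall_lt_succ_right.2 ⟨hc, hm⟩), hfx, hm, Nat.mod_self, hR]
        linarith
      · rw [if_neg (show ¬ ∀ j < m + 1, (x j : ℕ) + 1 = α j from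
            fun h => hm (Nat.forall_lt_succ_right.1 h).2), hfx,
          Nat.mod_eq_of_lt (lt_of_le_of_ne (x m).isLt hm)]
        linarith
    · have hfx : odometer α x m = x m := by simp only [odometer, if_neg hc]
      rw [if_neg hc] at ih
      rw [if_neg (show ¬ ∀ j < m + 1, (x j : ℕ) + 1 = α j from
          fun h => hc (Nat.forall_lt_succ_right.1 h).1), hfx]
      omega

lemma value_odometer (m : ℕ) (x : ∀ i, Fin (α i)) :
    value α m (odometer α x) = (value α m x + 1) % radix α m := by
  rw [← value_odometer_add_carry]
  split_ifs
  · rw [Nat.add_mod_right, Nat.mod_eq_of_lt (value_lt m _)]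
  · rw [add_zero, Nat.mod_eq_of_lt (value_lt m _)]

lemma value_iterate_odometer (m k : ℕ) (x : ∀ i, Fin (α i)) :
    value α m ((odometer α)^[k] x) = (value α m x + k) % radix α m := by
  induction k with
  | zero => exact (Nat.mod_eq_of_lt (value_lt m x)).symm
  | succ k ih =>
    rw [Function.iterate_succ_apply', value_odometer, ih, Nat.mod_add_mod, add_assoc]

lemma radix_strictMono (hα : ∀ i, 2 ≤ α i) : StrictMono (radix α) :=
  strictMono_nat_of_lt_succ fun m => by
    rw [radix_succ]
    exact lt_mul_right (Finset.prod_pos fun i _ => by linarith [hα i]) (hα m)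

lemma exists_radix_le_lt (hα : ∀ i, 2 ≤ α i) {k : ℕ} (hk : 0 < k) :
    ∃ s, radix α s ≤ k ∧ k < radix α (s + 1) := by
  obtain ⟨s, hs, hs'⟩ := (radix_strictMono hα).exists_between_of_tendsto_atTop
    (radix_strictMono hα).tendsto_atTop (x := k + 1) (by simpa [radix] using hk)
  exact ⟨s, Nat.lt_succ_iff.1 hs, hs'⟩

/-- Adding `k` with `radix s ≤ k < radix (s + 1)` changes the digit pair at `s, s + 1`: `k` has a
nonzero digit at `s` and none above, and one carry from below cannot wrap the pair around. -/
lemma iterate_odometer_apply_ne {s : ℕ} (hα : 2 ≤ α (s + 1)) {k : ℕ} (hk : radix α s ≤ k)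
    (hk' : k < radix α (s + 1)) (x : ∀ i, Fin (α i)) :
    (odometer α)^[k] x s ≠ x s ∨ (odometer α)^[k] x (s + 1) ≠ x (s + 1) := by
  by_contra! h
  have hy := value_iterate_odometer (s + 2) k x
  rw [value_succ, value_succ, value_succ, value_succ, h.1, h.2] at hy
  have hxlt := value_lt (s + 2) x
  rw [value_succ, value_succ] at hxlt
  have hR : 2 * radix α (s + 1) ≤ radix α (s + 2) := by
    rw [radix_succ (s + 1), mul_comm]
    exact Nat.mul_le_mul_left _ hα
  have hxs := value_lt s x
  have hys := value_lt s ((odometer α)^[k] x)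
  generalize radix α (s + 2) = R at *
  rcases lt_or_ge (value α s x + x s * radix α s + x (s + 1) * radix α (s + 1) + k) R
    with hlt | hge
  · rw [Nat.mod_eq_of_lt hlt] at hy
    omega
  · rw [Nat.mod_eq_sub_mod hge, Nat.mod_eq_of_lt (by omega)] at hy
    omega

def odometerInv (α : ℕ → ℕ) (x : ∀ i, Fin (α i)) : ∀ i, Fin (α i) := fun i =>
  if ∀ j < i, (x j : ℕ) = 0 then ⟨((x i : ℕ) + (α i - 1)) % α i, Nat.mod_lt _ (x i).pos⟩ else x i

lemma forall_odometer_eq_zero_iff (x : ∀ i, Fin (α i)) (i : ℕ) :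
    (∀ j < i, (odometer α x j : ℕ) = 0) ↔ ∀ j < i, (x j : ℕ) + 1 = α j := by
  induction i with
  | zero => simp
  | succ i ih =>
    rw [Nat.forall_lt_succ_right, Nat.forall_lt_succ_right, ih]
    by_cases hc : ∀ j < i, (x j : ℕ) + 1 = α j
    · refine and_congr_right fun _ => ?_
      simp only [odometer, if_pos hc]
      rcases (show (x i : ℕ) + 1 ≤ α i from (x i).isLt).lt_or_eq with h | h
      · simp [Nat.mod_eq_of_lt h, h.ne]
      · rw [h, Nat.mod_self]
        simp
    · simp [hc]

lemma leftInverse_odometerInv : Function.LeftInverse (odometerInv α) (odometer α) := by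
  intro x
  funext i
  simp only [odometerInv, forall_odometer_eq_zero_iff]
  split_ifs with hc
  · ext
    simp only [odometer, if_pos hc]
    rw [Nat.mod_add_mod, show (x i : ℕ) + 1 + (α i - 1) = x i + α i by have := (x i).pos; omega,
      Nat.add_mod_right, Nat.mod_eq_of_lt (x i).isLt]
  · simp only [odometer, if_neg hc]

lemma measurableSet_forall_lt (q : ∀ j, Fin (α j) → Prop) (i : ℕ) :
    MeasurableSet {x : ∀ j, Fin (α j) | ∀ j < i, q j (x j)} := by
  simp only [Set.ofPred_forall]
  exact .iInter fun j => .iInter fun _ => measurable_pi_apply j MeasurableSet.of_discrete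

lemma measurable_odometer : Measurable (odometer α) :=
  measurable_pi_lambda _ fun i =>
    Measurable.ite (measurableSet_forall_lt (fun j y => (y : ℕ) + 1 = α j) i)
      ((Measurable.of_discrete (f := fun y : Fin (α i) =>
        (⟨((y : ℕ) + 1) % α i, Nat.mod_lt _ y.pos⟩ : Fin (α i)))).comp (measurable_pi_apply i))
      (measurable_pi_apply i)

lemma measurable_odometerInv : Measurable (odometerInv α) :=
  measurable_pi_lambda _ fun i =>
    Measurable.ite (measurableSet_forall_lt (fun _ y => (y : ℕ) = 0) i)
      ((Measurable.of_discrete (f := fun y : Fin (α i) =>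
        (⟨((y : ℕ) + (α i - 1)) % α i, Nat.mod_lt _ y.pos⟩ : Fin (α i)))).comp
        (measurable_pi_apply i))
      (measurable_pi_apply i)

end Odometer

namespace IsProductMeasure

variable {α : ℕ → ℕ} {w : ∀ i, Fin (α i) → ℝ≥0} {μ : Measure (∀ i, Fin (α i))}

lemma isProbabilityMeasure (hμ : IsProductMeasure α w μ) : IsProbabilityMeasure μ :=
  ⟨by simpa using hμ 0 fun i => i.elim0⟩

lemma measure_pi_mem (hμ : IsProductMeasure α w μ) (n : ℕ)
    (t : ∀ i : Fin n, Finset (Fin (α i))) :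
    μ {x : ∀ i, Fin (α i) | ∀ i : Fin n, x i ∈ t i} = ∏ i, ∑ j ∈ t i, (w i j : ℝ≥0∞) := by
  classical
  have hU : {x : ∀ i, Fin (α i) | ∀ i : Fin n, x i ∈ t i} =
      ⋃ a ∈ Fintype.piFinset t, {x | ∀ i : Fin n, x i = a i} := by
    ext x
    simp only [Set.mem_ofPred_eq, Set.mem_iUnion, Fintype.mem_piFinset, exists_prop]
    exact ⟨fun h => ⟨fun i => x i, h, fun _ => rfl⟩, fun ⟨a, ha, hx⟩ i => hx i ▸ ha i⟩
  rw [hU, measure_biUnion_finset, Finset.prod_univ_sum]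
  · exact Finset.sum_congr rfl fun a _ => hμ n a
  · intro a _ b _ hab
    refine Set.disjoint_left.2 fun x hxa hxb => hab (funext fun i => (hxa i).symm.trans (hxb i))
  · intro a _
    simp only [Set.ofPred_forall]
    exact .iInter fun i => measurableSet_eq_fun (measurable_pi_apply _) measurable_const

lemma measure_eval_eq (hμ : IsProductMeasure α w μ) (hw : ∀ i, ∑ j, w i j = 1) (i : ℕ)
    (c : Fin (α i)) : μ {x | x i = c} = w i c := by
  classical
  have hset : {x : ∀ i, Fin (α i) | x i = c} = {x | ∀ j : Fin (i + 1),
      x j ∈ Finset.univ.filter fun d : Fin (α j) => (j : ℕ) = i → (d : ℕ) = c} := by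
    ext x
    simp only [Set.mem_ofPred_eq, Finset.mem_filter, Finset.mem_univ, true_and]
    refine ⟨fun h j hj => ?_, fun h => Fin.ext (h (Fin.last i) rfl)⟩
    obtain ⟨j, hji⟩ := j
    obtain rfl : j = i := hj
    rw [h]
  have hlow : ∀ j : Fin i, ∑ d ∈ Finset.univ.filter (fun d : Fin (α (Fin.castSucc j)) =>
      ((Fin.castSucc j : ℕ) = i → (d : ℕ) = c)), (w (Fin.castSucc j) d : ℝ≥0∞) = 1 := by
    intro j
    rw [Finset.filter_true_of_mem fun _ _ h => absurd h j.isLt.ne, ← ENNReal.ofNNReal_finsetSum,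
      hw, ENNReal.coe_one]
  have htop : Finset.univ.filter (fun d : Fin (α i) => ((Fin.last i : ℕ) = i → (d : ℕ) = c)) =
      {c} := by
    ext d
    simp [Fin.ext_iff]
  rw [hset, hμ.measure_pi_mem, Fin.prod_univ_castSucc, Finset.prod_congr rfl fun j _ => hlow j,
    Finset.prod_const_one, one_mul]
  exact (congrArg (fun t => ∑ d ∈ t, (w i d : ℝ≥0∞)) htop).trans (Finset.sum_singleton _ _)

lemma measure_eval_ne (hμ : IsProductMeasure α w μ) (hw : ∀ i, ∑ j, w i j = 1) (i : ℕ)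
    (c : Fin (α i)) : μ {x | x i ≠ c} = 1 - w i c := by
  have := hμ.isProbabilityMeasure
  rw [← hμ.measure_eval_eq hw i c,
    ← prob_compl_eq_one_sub (measurableSet_eq_fun (measurable_pi_apply i) measurable_const)]
  rfl

lemma measure_compl_eval_pair_le (hμ : IsProductMeasure α w μ) (hw : ∀ i, ∑ j, w i j = 1)
    (s : ℕ) (b : Fin (α s)) (b' : Fin (α (s + 1))) :
    μ {x | x s = b ∧ x (s + 1) = b'}ᶜ ≤ (1 - w s b) + (1 - w (s + 1) b') := by
  rw [Set.compl_ofPred]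
  simp only [not_and_or, Set.ofPred_or]
  rw [← hμ.measure_eval_ne hw, ← hμ.measure_eval_ne hw]
  exact measure_union_le _ _

end IsProductMeasure

namespace Odometer

variable {α : ℕ → ℕ} {w : ∀ i, Fin (α i) → ℝ≥0} {μ : Measure (∀ i, Fin (α i))}

/-- The witness is `{x | x s = b ∧ x (s + 1) = b'}` for digits `b, b'` of maximal weight, where
`radix s ≤ k < radix (s + 1)`. -/
theorem eventually_exists_measure_lt (hα : ∀ i, 2 ≤ α i) (hμ : IsProductMeasure α w μ)
    (hw : ∀ i, ∑ j, w i j = 1)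
    (heta : Tendsto (fun i => ((⨆ j, w i j : ℝ≥0) : ℝ)) atTop (𝓝 1)) {δ : ℝ≥0∞} (hδ : 0 < δ) :
    ∀ᶠ k in atTop, ∃ s, MeasurableSet s ∧ μ sᶜ < δ ∧ μ ((odometer α)^[k] ⁻¹' s) < δ := by
  have hη : Tendsto (fun i => 1 - ((⨆ j, w i j : ℝ≥0) : ℝ≥0∞)) atTop (𝓝 0) := by
    have := ENNReal.tendsto_coe.2 ((NNReal.tendsto_coe (x := 1)).1 (by simpa only [NNReal.coe_one]))
    simpa using ENNReal.Tendsto.sub tendsto_const_nhds this (Or.inl ENNReal.one_ne_top)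
  obtain ⟨N, hN⟩ := eventually_atTop.1 (hη.eventually (gt_mem_nhds (ENNReal.half_pos hδ.ne')))
  filter_upwards [eventually_ge_atTop (radix α N)] with k hk
  obtain ⟨s, hs, hs'⟩ := exists_radix_le_lt hα
    (lt_of_lt_of_le (Finset.prod_pos fun i _ => by linarith [hα i]) hk)
  have hsN : N < s + 1 := (radix_strictMono hα).lt_iff_lt.1 (hk.trans_lt hs')
  have (i : ℕ) : Nonempty (Fin (α i)) := ⟨⟨0, by linarith [hα i]⟩⟩
  obtain ⟨b, hb⟩ := exists_eq_ciSup_of_finite (f := w s)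
  obtain ⟨b', hb'⟩ := exists_eq_ciSup_of_finite (f := w (s + 1))
  set P := {x : ∀ i, Fin (α i) | x s = b ∧ x (s + 1) = b'}
  have hP : μ Pᶜ < δ := calc
    μ Pᶜ ≤ (1 - w s b) + (1 - w (s + 1) b') := hμ.measure_compl_eval_pair_le hw s b b'
    _ < δ / 2 + δ / 2 := by
      rw [hb, hb']
      exact ENNReal.add_lt_add (hN s (by omega)) (hN (s + 1) (by omega))
    _ = δ := ENNReal.add_halves δ
  refine ⟨P, ?_, hP, (measure_mono fun x hx hPx => ?_).trans_lt hP⟩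
  · exact (measurableSet_eq_fun (measurable_pi_apply s) measurable_const).inter
      (measurableSet_eq_fun (measurable_pi_apply (s + 1)) measurable_const)
  · rcases iterate_odometer_apply_ne (hα (s + 1)) hs hs' x with h | h
    exacts [h (hx.1.trans hPx.1.symm), h (hx.2.trans hPx.2.symm)]

end Odometer

open Odometer in
theorem mixing_of_eta_tendsto_one_general
    (α : ℕ → ℕ) (hα : ∀ i, 2 ≤ α i)
    (w : ∀ i, Fin (α i) → NNReal)
    (hw_sum : ∀ i, ∑ j, w i j = 1)
    (μ : Measure (∀ i, Fin (α i))) (hμ : IsProductMeasure α w μ)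
    (hstar : CondStar μ (odometer α))
    (p : ENNReal) [Fact (1 ≤ p)] (hp' : p ≠ ⊤)
    (T : Lp ℝ p μ →L[ℝ] Lp ℝ p μ)
    (hT : ∀ φ : Lp ℝ p μ, ⇑(T φ) =ᵐ[μ] (⇑φ ∘ odometer α))
    (heta : Tendsto (fun i => ((⨆ j, w i j : NNReal) : ℝ)) atTop (𝓝 1)) :
    TopMixing ⇑T := by
  have := hμ.isProbabilityMeasure
  exact topMixing_of_eventually_measure_lt hp'
    (hstar.quasiMeasurePreserving measurable_odometer) measurable_odometerInv
    leftInverse_odometerInv hT fun δ hδ => eventually_exists_measure_lt hα hμ hw_sum heta hδ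

/-- If `lim_i η_i = 1`, then the composition operator `T_f` on `L^p(μ)` is
topologically mixing. -/
theorem mixing_of_eta_tendsto_one
    (α : ℕ → ℕ) (hα : ∀ i, 2 ≤ α i)
    (w : ∀ i, Fin (α i) → NNReal)
    (hw_pos : ∀ i j, 0 < w i j) (hw_sum : ∀ i, ∑ j, w i j = 1)
    (μ : Measure (∀ i, Fin (α i))) (hμ : IsProductMeasure α w μ)
    (hstar : CondStar μ (odometer α))
    (p : ENNReal) [Fact (1 ≤ p)] (hp' : p ≠ ⊤)
    (T : Lp ℝ p μ →L[ℝ] Lp ℝ p μ)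
    (hT : ∀ φ : Lp ℝ p μ, ⇑(T φ) =ᵐ[μ] (⇑φ ∘ odometer α))
    (heta : Tendsto (fun i => ((⨆ j, w i j : NNReal) : ℝ)) atTop (𝓝 1)) :
    TopMixing ⇑T :=
  mixing_of_eta_tendsto_one_general α hα w hw_sum μ hμ hstar p hp' T hT heta
end
end

section
/- Suppose {α_i} and {μ_i} are such that Condition (*) holds (so that T_f is a bounded linear operator). If the composition operator T_f : L^p(μ) → L^p(μ) is topologically transitive, then for every ε > 0 there exist an open set U ⊆ 𝒜 with μ(U) < ε and a positive integer k such that μ(f^k(U)) > 1 − ε. -/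
open MeasureTheory Filter Set Topology ENNReal NNReal

noncomputable section

/-!
Transitivity of `T_f` yields `φ ∈ Lᵖ` close to the constant `1` with `T_f^k φ` close to `0`.
Convergence in `Lᵖ` implies convergence in measure, so `A = {|φ| ≥ 1/2}` has measure `> 1 - ε`,
while `f^{-k}(A) = {|φ ∘ f^k| ≥ 1/2}` has measure `< ε`; here Condition (*) is what identifies
`T_f^k φ` with `φ ∘ f^k` almost everywhere. By outer regularity `f^{-k}(A)` lies in an open `U`
with `μ U < ε`, and `f^k(U) ⊇ A` because the odometer is onto.
-/

lemma Nat.add_sub_one_mod_of_lt {a n : ℕ} (h : a < n) :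
    (a + (n - 1)) % n = if a = 0 then n - 1 else a - 1 := by
  rcases a with _ | b
  · simp [Nat.mod_eq_of_lt (show n - 1 < n by omega)]
  · rw [show b + 1 + (n - 1) = b + n by omega, Nat.add_mod_right, Nat.mod_eq_of_lt (by omega)]
    simp

def odometerPred (α : ℕ → ℕ) (y : ∀ i, Fin (α i)) : ∀ i, Fin (α i) :=
  fun i =>
    if ∀ j < i, (y j : ℕ) = 0
    then ⟨((y i : ℕ) + (α i - 1)) % α i, Nat.mod_lt _ (y i).pos⟩
    else y i

lemma odometerPred_val_of_forall {α : ℕ → ℕ} {y : ∀ i, Fin (α i)} {i : ℕ}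
    (hy : ∀ j < i, (y j : ℕ) = 0) :
    (odometerPred α y i : ℕ) = if (y i : ℕ) = 0 then α i - 1 else y i - 1 := by
  rw [odometerPred, if_pos hy]
  exact Nat.add_sub_one_mod_of_lt (y i).isLt

lemma odometerPred_of_not_forall {α : ℕ → ℕ} {y : ∀ i, Fin (α i)} {i : ℕ}
    (hy : ¬ ∀ j < i, (y j : ℕ) = 0) : odometerPred α y i = y i :=
  if_neg hy

lemma odometerPred_carry_iff (α : ℕ → ℕ) (y : ∀ i, Fin (α i)) (i : ℕ) :
    (∀ j < i, (odometerPred α y j : ℕ) + 1 = α j) ↔ ∀ j < i, (y j : ℕ) = 0 := by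
  induction i with
  | zero => simp
  | succ i ih =>
    simp only [Nat.forall_lt_succ_right, ih]
    refine and_congr_right fun hy => ?_
    have := (y i).isLt
    rw [odometerPred_val_of_forall hy]
    split_ifs <;> omega

lemma odometer_val_of_forall {α : ℕ → ℕ} {x : ∀ i, Fin (α i)} {i : ℕ}
    (hx : ∀ j < i, (x j : ℕ) + 1 = α j) :
    (odometer α x i : ℕ) = ((x i : ℕ) + 1) % α i := by
  rw [odometer, if_pos hx]

lemma odometer_of_not_forall {α : ℕ → ℕ} {x : ∀ i, Fin (α i)} {i : ℕ}
    (hx : ¬ ∀ j < i, (x j : ℕ) + 1 = α j) : odometer α x i = x i :=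
  if_neg hx

lemma odometer_odometerPred (α : ℕ → ℕ) (y : ∀ i, Fin (α i)) :
    odometer α (odometerPred α y) = y := by
  funext i
  by_cases hy : ∀ j < i, (y j : ℕ) = 0
  · have := (y i).isLt
    apply Fin.ext
    rw [odometer_val_of_forall ((odometerPred_carry_iff α y i).2 hy),
      odometerPred_val_of_forall hy]
    split_ifs with h0
    · rw [Nat.sub_add_cancel (by omega), Nat.mod_self, h0]
    · rw [Nat.sub_add_cancel (by omega), Nat.mod_eq_of_lt (y i).isLt]
  · rw [odometer_of_not_forall (mt (odometerPred_carry_iff α y i).1 hy),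
      odometerPred_of_not_forall hy]

lemma odometer_surjective (α : ℕ → ℕ) : Function.Surjective (odometer α) :=
  fun y => ⟨odometerPred α y, odometer_odometerPred α y⟩

lemma IsProductMeasure.isProbabilityMeasure_s15 {α : ℕ → ℕ} {w : ∀ i, Fin (α i) → NNReal}
    {μ : Measure (∀ i, Fin (α i))} (hμ : IsProductMeasure α w μ) : IsProbabilityMeasure μ :=
  ⟨by simpa using hμ 0 fun i => i.elim0⟩

section CondStar

variable {X : Type*} [MeasurableSpace X] {μ : Measure X} {g : X → X}

lemma CondStar.measure_preimage_null (hg : CondStar μ g) {N : Set X} (hN : μ N = 0) :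
    μ (g ⁻¹' N) = 0 := by
  obtain ⟨c, hc, hle⟩ := hg
  have h := hle _ (measurableSet_toMeasurable μ N)
  rw [measure_toMeasurable, hN, nonpos_iff_eq_zero, mul_eq_zero] at h
  refine measure_mono_null (preimage_mono (subset_toMeasurable μ N)) (h.resolve_left ?_)
  simpa using hc

lemma CondStar.ae_comp (hg : CondStar μ g) {P : X → Prop} (h : ∀ᵐ x ∂μ, P x) :
    ∀ᵐ x ∂μ, P (g x) := by
  rw [ae_iff] at h ⊢
  exact hg.measure_preimage_null h

lemma CondStar.coeFn_iterate_ae_eq {E : Type*} [NormedAddCommGroup E] {p : ℝ≥0∞}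
    (hg : CondStar μ g) {T : Lp E p μ → Lp E p μ} (hT : ∀ φ, T φ =ᵐ[μ] φ ∘ g) (n : ℕ)
    (φ : Lp E p μ) : T^[n] φ =ᵐ[μ] φ ∘ g^[n] := by
  induction n with
  | zero => rfl
  | succ n ih =>
    rw [Function.iterate_succ_apply', Function.iterate_succ]
    exact (hT _).trans (hg.ae_comp ih)

end CondStar

lemma TopTransitive.exists_iterate_of_eventually {X : Type*} [TopologicalSpace X] {T : X → X}
    (hT : TopTransitive T) {a b : X} {P Q : X → Prop} (hP : ∀ᶠ x in 𝓝 a, P x)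
    (hQ : ∀ᶠ y in 𝓝 b, Q y) : ∃ k, 1 ≤ k ∧ ∃ x, P x ∧ Q (T^[k] x) := by
  obtain ⟨U, hUP, hU, haU⟩ := eventually_nhds_iff.1 hP
  obtain ⟨V, hVQ, hV, hbV⟩ := eventually_nhds_iff.1 hQ
  obtain ⟨k, hk, _, ⟨x, hxU, rfl⟩, hxV⟩ := hT U V hU hV ⟨a, haU⟩ ⟨b, hbV⟩
  exact ⟨k, hk, x, hUP x hxU, hVQ _ hxV⟩

lemma Lp.eventually_measure_le_edist_lt {X E : Type*} [MeasurableSpace X] {μ : Measure X}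
    [NormedAddCommGroup E] {p : ℝ≥0∞} [Fact (1 ≤ p)] {g : Lp E p μ} {h : X → E}
    (hg : g =ᵐ[μ] h) {η ε : ℝ≥0∞} (hη : 0 < η) (hε : 0 < ε) :
    ∀ᶠ f in 𝓝 g, μ {x | η ≤ edist ((f : Lp E p μ) x) (h x)} < ε :=
  ((tendstoInMeasure_of_tendsto_Lp tendsto_id).congr_right hg η hη).eventually (gt_mem_nhds hε)

lemma inv_two_le_edist_of_edist_lt {X : Type*} [PseudoEMetricSpace X] {x y z : X}
    (hyz : 1 ≤ edist y z) (hxz : edist x z < 2⁻¹) : 2⁻¹ ≤ edist x y := by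
  by_contra! hxy
  have := (edist_triangle_left y z x).trans_lt (ENNReal.add_lt_add hxy hxz)
  rw [ENNReal.inv_two_add_inv_two] at this
  exact this.not_ge hyz

lemma ofReal_one_sub_lt_measure_of_measure_compl_lt {X : Type*} [MeasurableSpace X]
    {μ : Measure X} [IsProbabilityMeasure μ] {s : Set X} {ε : ℝ} (hε : ε ≤ 1)
    (h : μ sᶜ < ENNReal.ofReal ε) : ENNReal.ofReal (1 - ε) < μ s := by
  have hε₀ : 0 ≤ ε := ENNReal.ofReal_pos.1 (pos_of_gt h) |>.le
  rw [ENNReal.ofReal_sub _ hε₀, ENNReal.ofReal_one]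
  refine ENNReal.sub_lt_of_lt_add (ENNReal.ofReal_le_one.2 hε) ?_
  calc 1 = μ univ := measure_univ.symm
    _ ≤ μ s + μ sᶜ := measure_univ_le_add_compl s
    _ < μ s + ENNReal.ofReal ε := by gcongr; exact measure_ne_top μ s

lemma exists_isOpen_measure_lt_subset_image {X Y : Type*} [TopologicalSpace X]
    [MeasurableSpace X] {μ : Measure X} [μ.OuterRegular] {g : X → Y}
    (hg : Function.Surjective g) {A : Set Y} {r : ℝ≥0∞} (hA : μ (g ⁻¹' A) < r) :
    ∃ U, IsOpen U ∧ μ U < r ∧ A ⊆ g '' U := by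
  obtain ⟨U, hAU, hU, hUr⟩ := (g ⁻¹' A).exists_isOpen_lt_of_lt r hA
  exact ⟨U, hU, hUr, (hg.image_preimage A).symm.subset.trans (image_mono hAU)⟩

theorem exists_open_small_with_large_image_of_transitive_general
    (α : ℕ → ℕ)
    (w : ∀ i, Fin (α i) → NNReal)
    (μ : Measure (∀ i, Fin (α i))) (hμ : IsProductMeasure α w μ)
    (hstar : CondStar μ (odometer α))
    (p : ENNReal) [Fact (1 ≤ p)]
    (T : Lp ℝ p μ →L[ℝ] Lp ℝ p μ)
    (hT : ∀ φ : Lp ℝ p μ, ⇑(T φ) =ᵐ[μ] (⇑φ ∘ odometer α))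
    (htrans : TopTransitive ⇑T) :
    ∀ ε : ℝ, 0 < ε → ∃ U : Set (∀ i, Fin (α i)), IsOpen U ∧ μ U < ENNReal.ofReal ε ∧
      ∃ k : ℕ, 1 ≤ k ∧ ENNReal.ofReal (1 - ε) < μ ((odometer α)^[k] '' U) := by
  intro ε hε
  have := hμ.isProbabilityMeasure_s15
  -- `ε` is capped at `1`: for `ε ≥ 1`, `ofReal (1 - ε) = 0` and `μ A > 0` is still needed.
  have hε' : 0 < ENNReal.ofReal (min ε 1) := ENNReal.ofReal_pos.2 (lt_min hε one_pos)
  obtain ⟨k, hk, φ, hφ_one, hφ_zero⟩ := htrans.exists_iterate_of_eventually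
    (Lp.eventually_measure_le_edist_lt (Lp.coeFn_const p μ (1 : ℝ)) (η := 2⁻¹) (by simp) hε')
    (Lp.eventually_measure_le_edist_lt (Lp.coeFn_zero ℝ p μ) (η := 2⁻¹) (by simp) hε')
  set A := {x | (2 : ℝ≥0∞)⁻¹ ≤ edist (φ x) 0}
  have hA : ENNReal.ofReal (1 - ε) < μ A := by
    refine (ENNReal.ofReal_le_ofReal (by linarith [min_le_left ε 1])).trans_lt
      (ofReal_one_sub_lt_measure_of_measure_compl_lt (min_le_right ε 1) ?_)
    refine (measure_mono fun x hx => ?_).trans_lt hφ_one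
    exact inv_two_le_edist_of_edist_lt (by simp) (not_le.1 hx)
  have hpre : μ ((odometer α)^[k] ⁻¹' A) < ENNReal.ofReal ε := by
    refine (measure_congr ?_).trans_lt
      (hφ_zero.trans_le (ENNReal.ofReal_le_ofReal (min_le_left ε 1)))
    refine eventuallyEq_set.2 ?_
    filter_upwards [hstar.coeFn_iterate_ae_eq hT k φ] with x hx
    simp only [A, mem_preimage, mem_ofPred_eq, hx, Function.comp_apply, Pi.zero_apply]
  obtain ⟨U, hU, hUε, hAU⟩ :=
    exists_isOpen_measure_lt_subset_image ((odometer_surjective α).iterate k) hpre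
  exact ⟨U, hU, hUε, k, hk, hA.trans_le (measure_mono hAU)⟩

/-- If the composition operator `T_f` on `L^p(μ)` is topologically transitive, then for
every `ε > 0` there are an open set `U` with `μ(U) < ε` and `k ≥ 1` with
`μ(f^k(U)) > 1 - ε`. -/
theorem exists_open_small_with_large_image_of_transitive
    (α : ℕ → ℕ) (hα : ∀ i, 2 ≤ α i)
    (w : ∀ i, Fin (α i) → NNReal)
    (hw_pos : ∀ i j, 0 < w i j) (hw_sum : ∀ i, ∑ j, w i j = 1)
    (μ : Measure (∀ i, Fin (α i))) (hμ : IsProductMeasure α w μ)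
    (hstar : CondStar μ (odometer α))
    (p : ENNReal) [Fact (1 ≤ p)] (hp' : p ≠ ⊤)
    (T : Lp ℝ p μ →L[ℝ] Lp ℝ p μ)
    (hT : ∀ φ : Lp ℝ p μ, ⇑(T φ) =ᵐ[μ] (⇑φ ∘ odometer α))
    (htrans : TopTransitive ⇑T) :
    ∀ ε : ℝ, 0 < ε → ∃ U : Set (∀ i, Fin (α i)), IsOpen U ∧ μ U < ENNReal.ofReal ε ∧
      ∃ k : ℕ, 1 ≤ k ∧ ENNReal.ofReal (1 - ε) < μ ((odometer α)^[k] '' U) :=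
  exists_open_small_with_large_image_of_transitive_general α w μ hμ hstar p T hT htrans
end
end

section
/- Suppose there is M > 0 with ρ_n ≤ M for all n ∈ ℕ. Then for every open set U ⊆ 𝒜 and every integer k ≥ 1 one has μ(f^k(U)) ≤ M·μ(U). -/
open MeasureTheory Filter Set Topology ENNReal NNReal

noncomputable section

namespace PiNat

variable {E : ℕ → Type*}

def truncate (n : ℕ) (x : ∀ i, E i) : ∀ i : Fin n, E i := fun i => x i

lemma measurable_truncate [∀ i, MeasurableSpace (E i)] (n : ℕ) :
    Measurable (truncate n : (∀ i, E i) → ∀ i : Fin n, E i) :=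
  measurable_pi_lambda _ fun i => measurable_pi_apply (i : ℕ)

lemma preimage_truncate_singleton (n : ℕ) (a : ∀ i : Fin n, E i) :
    truncate n ⁻¹' {a} = {x | ∀ i : Fin n, x i = a i} := by
  ext x
  simp [truncate, funext_iff]

lemma preimage_truncate_singleton_truncate (x : ∀ i, E i) (n : ℕ) :
    truncate n ⁻¹' {truncate n x} = cylinder x n := by
  ext y
  simp [preimage_truncate_singleton, truncate, Fin.forall_iff]

lemma setOf_cylinder_subset_eq_preimage (U : Set (∀ i, E i)) (n : ℕ) :
    {x | cylinder x n ⊆ U} = truncate n ⁻¹' {a | truncate n ⁻¹' {a} ⊆ U} := by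
  ext x
  simp [preimage_truncate_singleton_truncate]

lemma monotone_setOf_cylinder_subset (U : Set (∀ i, E i)) :
    Monotone fun n => {x | cylinder x n ⊆ U} :=
  fun _ _ hmn _ hx => (cylinder_anti _ hmn).trans hx

lemma iUnion_setOf_cylinder_succ_subset [∀ i, TopologicalSpace (E i)]
    [∀ i, DiscreteTopology (E i)] {U : Set (∀ i, E i)} (hU : IsOpen U) :
    ⋃ n, {x | cylinder x (n + 1) ⊆ U} = U := by
  refine Subset.antisymm (iUnion_subset fun n x hx => hx (self_mem_cylinder x _)) fun x hx => ?_
  obtain ⟨_, ⟨y, n, rfl⟩, hxy, hyU⟩ :=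
    (isTopologicalBasis_cylinders E).exists_subset_of_mem_open hx hU
  rw [← mem_cylinder_iff_eq.1 hxy] at hyU
  exact mem_iUnion.2 ⟨n, (cylinder_anti x n.le_succ).trans hyU⟩

variable {g : (∀ i, E i) → ∀ i, E i}

lemma mapsTo_iterate_cylinder (hg : ∀ x n, MapsTo g (cylinder x n) (cylinder (g x) n))
    (k : ℕ) (x : ∀ i, E i) (n : ℕ) : MapsTo g^[k] (cylinder x n) (cylinder (g^[k] x) n) := by
  induction k generalizing x with
  | zero => exact mapsTo_id _
  | succ k ih => exact (ih (g x)).comp (hg x n)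

lemma exists_image_preimage_truncate_subset
    (hg : ∀ x n, MapsTo g (cylinder x n) (cylinder (g x) n)) (n : ℕ) (a : ∀ i : Fin n, E i) :
    ∃ b, g '' (truncate n ⁻¹' {a}) ⊆ truncate n ⁻¹' {b} := by
  rcases eq_empty_or_nonempty (truncate n ⁻¹' {a}) with h | ⟨x, rfl : truncate n x = a⟩
  · exact ⟨a, by simp [h]⟩
  · refine ⟨truncate n (g x), ?_⟩
    rw [preimage_truncate_singleton_truncate, preimage_truncate_singleton_truncate]
    exact (hg x n).image_subset

end PiNat

namespace MeasureTheory

variable {X : Type*} [MeasurableSpace X] {μ : Measure X} {g : X → X} {c : ℝ≥0∞}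

lemma measure_image_preimage_le_of_fiber {β : Type*} [Finite β] {π : X → β}
    (hπ : ∀ b, MeasurableSet (π ⁻¹' {b})) (h : ∀ b, μ (g '' (π ⁻¹' {b})) ≤ c * μ (π ⁻¹' {b}))
    (s : Set β) : μ (g '' (π ⁻¹' s)) ≤ c * μ (π ⁻¹' s) := by
  obtain ⟨s, rfl⟩ := s.toFinite.exists_finset_coe
  calc μ (g '' (π ⁻¹' s)) = μ (⋃ b ∈ s, g '' (π ⁻¹' {b})) := by
        rw [← Finset.set_biUnion_preimage_singleton, image_iUnion₂]
    _ ≤ ∑ b ∈ s, μ (g '' (π ⁻¹' {b})) := measure_biUnion_finset_le _ _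
    _ ≤ ∑ b ∈ s, c * μ (π ⁻¹' {b}) := Finset.sum_le_sum fun b _ => h b
    _ = c * μ (π ⁻¹' s) := by
        rw [← Finset.mul_sum, sum_measure_preimage_singleton s fun b _ => hπ b]

lemma measure_image_iUnion_le_of_monotone {V : ℕ → Set X} (hV : Monotone V)
    (h : ∀ n, μ (g '' V n) ≤ c * μ (V n)) : μ (g '' ⋃ n, V n) ≤ c * μ (⋃ n, V n) := by
  have hgV : Monotone fun n => g '' V n := fun _ _ hmn => image_mono (hV hmn)
  calc μ (g '' ⋃ n, V n) = ⨆ n, μ (g '' V n) := by rw [image_iUnion, hgV.measure_iUnion]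
    _ ≤ ⨆ n, c * μ (V n) := iSup_mono h
    _ = c * μ (⋃ n, V n) := by rw [← ENNReal.mul_iSup, hV.measure_iUnion]

end MeasureTheory

lemma NNReal.le_iSup_div_iInf_mul {ι : Type*} [Finite ι] {f : ι → ℝ≥0} (hf : ∀ i, 0 < f i)
    (p q : ι) : f p ≤ (⨆ i, f i) / (⨅ i, f i) * f q := by
  have : Nonempty ι := ⟨p⟩
  obtain ⟨i₀, hi₀⟩ := Finite.exists_min f
  have hinf : 0 < ⨅ i, f i := (hf i₀).trans_le (le_ciInf hi₀)
  calc f p ≤ ⨆ i, f i := le_ciSup (Finite.bddAbove_range f) p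
    _ = (⨆ i, f i) / (⨅ i, f i) * ⨅ i, f i := (div_mul_cancel₀ _ hinf.ne').symm
    _ ≤ (⨆ i, f i) / (⨅ i, f i) * f q := mul_le_mul_right (ciInf_le (OrderBot.bddBelow _) q) _

section Odometer

open PiNat

variable {α : ℕ → ℕ}

def weightRatio (w : ∀ i, Fin (α i) → ℝ≥0) (i : ℕ) : ℝ≥0 := (⨆ j, w i j) / ⨅ j, w i j

lemma measure_preimage_truncate_le {w : ∀ i, Fin (α i) → ℝ≥0} (hw_pos : ∀ i j, 0 < w i j)
    {μ : Measure (∀ i, Fin (α i))} (hμ : IsProductMeasure α w μ) (n : ℕ)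
    (a b : ∀ i : Fin n, Fin (α i)) :
    μ (truncate n ⁻¹' {b}) ≤
      (∏ i : Fin n, (weightRatio w i : ℝ≥0∞)) * μ (truncate n ⁻¹' {a}) := by
  rw [preimage_truncate_singleton, preimage_truncate_singleton, hμ, hμ, ← Finset.prod_mul_distrib]
  gcongr with i
  exact_mod_cast NNReal.le_iSup_div_iInf_mul (hw_pos i) (b i) (a i)

lemma prod_weightRatio_le {w : ∀ i, Fin (α i) → ℝ≥0} {M : ℝ}
    (hρ : ∀ n : ℕ, ∏ i ∈ Finset.range (n + 1),
      (((⨆ j, w i j : NNReal) : ℝ) / ((⨅ j, w i j : NNReal) : ℝ)) ≤ M) (n : ℕ) :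
    ∏ i : Fin (n + 1), (weightRatio w i : ℝ≥0∞) ≤ ENNReal.ofReal M := by
  rw [← ENNReal.ofNNReal_finsetProd, ← ENNReal.ofReal_coe_nnreal, NNReal.coe_prod,
    Fin.prod_univ_eq_prod_range (fun i => (weightRatio w i : ℝ))]
  simpa [weightRatio] using ENNReal.ofReal_le_ofReal (hρ n)

lemma odometer_mapsTo_cylinder (x : ∀ i, Fin (α i)) (n : ℕ) :
    MapsTo (odometer α) (cylinder x n) (cylinder (odometer α x) n) := by
  intro y hy i hi
  have hcarry : (∀ j < i, (y j : ℕ) + 1 = α j) ↔ ∀ j < i, (x j : ℕ) + 1 = α j :=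
    forall₂_congr fun j hj => by rw [hy j (hj.trans hi)]
  simp only [odometer, hcarry, hy i hi]

end Odometer

theorem measure_image_le_of_rho_bounded_general
    (α : ℕ → ℕ)
    (w : ∀ i, Fin (α i) → NNReal)
    (hw_pos : ∀ i j, 0 < w i j)
    (μ : Measure (∀ i, Fin (α i))) (hμ : IsProductMeasure α w μ)
    (M : ℝ)
    (hρ : ∀ n : ℕ, ∏ i ∈ Finset.range (n + 1),
      (((⨆ j, w i j : NNReal) : ℝ) / ((⨅ j, w i j : NNReal) : ℝ)) ≤ M) :
    ∀ U : Set (∀ i, Fin (α i)), IsOpen U → ∀ k : ℕ, 1 ≤ k →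
      μ ((odometer α)^[k] '' U) ≤ ENNReal.ofReal M * μ U := by
  intro U hU k _
  have hfiber : ∀ n a, μ ((odometer α)^[k] '' (PiNat.truncate (n + 1) ⁻¹' {a})) ≤
      ENNReal.ofReal M * μ (PiNat.truncate (n + 1) ⁻¹' {a}) := by
    intro n a
    obtain ⟨b, hb⟩ := PiNat.exists_image_preimage_truncate_subset
      (PiNat.mapsTo_iterate_cylinder odometer_mapsTo_cylinder k) (n + 1) a
    calc _ ≤ μ (PiNat.truncate (n + 1) ⁻¹' {b}) := measure_mono hb
      _ ≤ _ := measure_preimage_truncate_le hw_pos hμ _ a b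
      _ ≤ _ := by gcongr; exact prod_weightRatio_le hρ n
  rw [← PiNat.iUnion_setOf_cylinder_succ_subset hU]
  refine measure_image_iUnion_le_of_monotone
    (fun m n hmn => PiNat.monotone_setOf_cylinder_subset U (Nat.succ_le_succ hmn)) fun n => ?_
  rw [PiNat.setOf_cylinder_subset_eq_preimage]
  exact measure_image_preimage_le_of_fiber
    (fun a => PiNat.measurable_truncate (n + 1) (measurableSet_singleton a)) (hfiber n) _

/-- If `ρ_n = ∏_{i=0}^n η_i/δ_i ≤ M` for all `n`, then `μ(f^k(U)) ≤ M·μ(U)` for every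
open set `U` and every `k ≥ 1`. -/
theorem measure_image_le_of_rho_bounded
    (α : ℕ → ℕ) (hα : ∀ i, 2 ≤ α i)
    (w : ∀ i, Fin (α i) → NNReal)
    (hw_pos : ∀ i j, 0 < w i j) (hw_sum : ∀ i, ∑ j, w i j = 1)
    (μ : Measure (∀ i, Fin (α i))) (hμ : IsProductMeasure α w μ)
    (M : ℝ) (hM : 0 < M)
    (hρ : ∀ n : ℕ, ∏ i ∈ Finset.range (n + 1),
      (((⨆ j, w i j : NNReal) : ℝ) / ((⨅ j, w i j : NNReal) : ℝ)) ≤ M) :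
    ∀ U : Set (∀ i, Fin (α i)), IsOpen U → ∀ k : ℕ, 1 ≤ k →
      μ ((odometer α)^[k] '' U) ≤ ENNReal.ofReal M * μ U :=
  measure_image_le_of_rho_bounded_general α w hw_pos μ hμ M hρ
end
end
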